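/- arXiv:0810.2529 — 3 statements merged into one kernel-verified Lean document; each statement's English description precedes it below -/
import Mathlib

section
/- Fix constants K > 0, W > 0 and N₀ > 0. The function F(M) = (K W / M) · e^{N₀W/M} · E₁(N₀W/M) is strictly decreasing in M on (0, ∞). Consequently, over integer values 1 ≤ M ≤ K, F attains its maximum at M = 1. -/
open MeasureTheory Real Set

/-- The exponential integral `E₁(x) = ∫_1^∞ e^{-x t}/t dt` for `x > 0`. -/
noncomputable def E₁ (x : ℝ) : ℝ := ∫ t in Ioi (1 : ℝ), Real.exp (-x * t) / t

lemma aux_integrable (c M : ℝ) (hc : 0 < c) (hM : 0 < M) :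
    IntegrableOn (fun s : ℝ => Real.exp (-c * s) / (1 + M * s)) (Ioi (0 : ℝ)) := by
  have hcont : ContinuousOn (fun s : ℝ => Real.exp (-c * s) / (1 + M * s)) (Ioi (0 : ℝ)) := by
    apply ContinuousOn.div
    · exact (Real.continuous_exp.comp (continuous_const.mul continuous_id)).continuousOn
    · exact (continuous_const.add (continuous_const.mul continuous_id)).continuousOn
    · intro s hs
      have : (0:ℝ) < 1 + M * s := by nlinarith [mem_Ioi.mp hs]
      exact this.ne'
  refine Integrable.mono' (exp_neg_integrableOn_Ioi 0 hc)
      (hcont.aestronglyMeasurable measurableSet_Ioi) ?_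
  filter_upwards [ae_restrict_mem measurableSet_Ioi] with s hs
  have hs0 : (0:ℝ) < s := hs
  have h1 : (1:ℝ) ≤ 1 + M * s := by nlinarith
  rw [Real.norm_eq_abs, abs_div, abs_of_pos (Real.exp_pos _), abs_of_pos (by linarith : (0:ℝ) < 1 + M * s)]
  rw [div_le_iff₀ (by linarith)]
  nlinarith [Real.exp_pos (-c * s)]

/-- Key substitution identity: `(1/M) e^{c/M} E₁(c/M) = ∫_0^∞ e^{-c s}/(1 + M s) ds`. -/
lemma key_subst (c M : ℝ) (hc : 0 < c) (hM : 0 < M) :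
    (1 / M) * Real.exp (c / M) * E₁ (c / M)
      = ∫ s in Ioi (0 : ℝ), Real.exp (-c * s) / (1 + M * s) := by
  have h1 : (∫ s in Ioi (0 : ℝ), Real.exp (-c * s) / (1 + M * s))
      = M⁻¹ • ∫ u in Ioi (0 : ℝ), Real.exp (-(c / M) * u) / (1 + u) := by
    have := MeasureTheory.integral_comp_mul_left_Ioi
      (fun u => Real.exp (-(c / M) * u) / (1 + u)) 0 hM
    simp only [mul_zero] at this
    rw [← this]
    congr 1
    ext s
    congr 2
    field_simp
  have h2 : (∫ u in Ioi (0 : ℝ), Real.exp (-(c / M) * u) / (1 + u))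
      = ∫ t in Ioi (1 : ℝ), Real.exp (-(c / M) * (t - 1)) / t := by
    have hmp : MeasurePreserving (fun u : ℝ => u + 1) volume volume :=
      measurePreserving_add_right volume 1
    have hemb : MeasurableEmbedding (fun u : ℝ => u + 1) :=
      (MeasurableEquiv.addRight (1 : ℝ)).measurableEmbedding
    have hpre : (fun u : ℝ => u + 1) ⁻¹' (Ioi (1 : ℝ)) = Ioi (0 : ℝ) := by
      ext u; simp [mem_Ioi]
    have := hmp.setIntegral_preimage_emb hemb
      (fun t => Real.exp (-(c / M) * (t - 1)) / t) (Ioi (1 : ℝ))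
    rw [hpre] at this
    rw [← this]
    congr 1
    ext x
    rw [add_sub_cancel_right]
    ring_nf
  have h3 : (∫ t in Ioi (1 : ℝ), Real.exp (-(c / M) * (t - 1)) / t)
      = Real.exp (c / M) * E₁ (c / M) := by
    rw [E₁, ← integral_const_mul]
    congr 1
    ext t
    have he : Real.exp (c / M) * Real.exp (-(c / M) * t) = Real.exp (-(c / M) * (t - 1)) := by
      rw [← Real.exp_add]; ring_nf
    rw [← he]; ring
  rw [h1, h2, h3, smul_eq_mul]
  ring

/-- For fixed `K, W, N₀ > 0`, the interference-free network average sum-rate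
`F(M) = (KW/M) e^{N₀W/M} E₁(N₀W/M)` is strictly decreasing in `M` on `(0,∞)`;
consequently over the integers `1 ≤ M ≤ K` its maximum is attained at `M = 1`. -/
theorem sumrate_strictAnti_in_clusters (K W N₀ : ℝ) (hK : 0 < K) (hW : 0 < W)
    (hN₀ : 0 < N₀) :
    StrictAntiOn
      (fun M : ℝ => K * W / M * Real.exp (N₀ * W / M) * E₁ (N₀ * W / M))
      (Ioi (0 : ℝ)) ∧
    ∀ M : ℕ, 1 ≤ M → (M : ℝ) ≤ K →
      K * W / (M : ℝ) * Real.exp (N₀ * W / (M : ℝ)) * E₁ (N₀ * W / (M : ℝ)) ≤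
        K * W / 1 * Real.exp (N₀ * W / 1) * E₁ (N₀ * W / 1) := by
  set c : ℝ := N₀ * W with hc_def
  have hc : 0 < c := mul_pos hN₀ hW
  have hrepr : ∀ M : ℝ, 0 < M →
      K * W / M * Real.exp (c / M) * E₁ (c / M)
        = K * W * ∫ s in Ioi (0 : ℝ), Real.exp (-c * s) / (1 + M * s) := by
    intro M hM
    rw [← key_subst c M hc hM]
    ring
  have hanti : StrictAntiOn
      (fun M : ℝ => K * W / M * Real.exp (c / M) * E₁ (c / M)) (Ioi (0 : ℝ)) := by
    intro M₁ hM₁ M₂ hM₂ hlt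
    rw [mem_Ioi] at hM₁ hM₂
    dsimp only
    rw [hrepr M₁ hM₁, hrepr M₂ hM₂]
    have hKW : 0 < K * W := mul_pos hK hW
    apply mul_lt_mul_of_pos_left _ hKW
    have hdiff : 0 < ∫ s in Ioi (0 : ℝ),
        (Real.exp (-c * s) / (1 + M₁ * s) - Real.exp (-c * s) / (1 + M₂ * s)) := by
      rw [setIntegral_pos_iff_support_of_nonneg_ae]
      · have : Ioi (0:ℝ) ⊆ Function.support
            (fun s => Real.exp (-c * s) / (1 + M₁ * s) - Real.exp (-c * s) / (1 + M₂ * s)) ∩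
            Ioi 0 := by
          intro s hs
          have hs0 : (0:ℝ) < s := hs
          refine ⟨?_, hs⟩
          have h1 : (0:ℝ) < 1 + M₁ * s := by nlinarith
          have h2 : (0:ℝ) < 1 + M₂ * s := by nlinarith
          have : Real.exp (-c * s) / (1 + M₂ * s) < Real.exp (-c * s) / (1 + M₁ * s) := by
            apply div_lt_div_of_pos_left (Real.exp_pos _) h1
            nlinarith
          simp only [Function.mem_support]
          exact (sub_pos.mpr this).ne'
        calc (0:ENNReal) < volume (Ioi (0:ℝ)) := by simp [Real.volume_Ioi]
          _ ≤ _ := measure_mono this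
      · filter_upwards [ae_restrict_mem measurableSet_Ioi] with s hs
        have hs0 : (0:ℝ) < s := hs
        have h1 : (0:ℝ) < 1 + M₁ * s := by nlinarith
        have h2 : (0:ℝ) < 1 + M₂ * s := by nlinarith
        have : Real.exp (-c * s) / (1 + M₂ * s) ≤ Real.exp (-c * s) / (1 + M₁ * s) := by
          apply div_le_div_of_nonneg_left (Real.exp_pos _).le h1
          nlinarith
        simp only [Pi.zero_apply]
        linarith
      · exact (aux_integrable c M₁ hc hM₁).sub (aux_integrable c M₂ hc hM₂)
    rw [MeasureTheory.integral_sub (aux_integrable c M₁ hc hM₁)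
        (aux_integrable c M₂ hc hM₂)] at hdiff
    linarith
  refine ⟨hanti, ?_⟩
  intro M hM1 hMK
  rcases eq_or_lt_of_le hM1 with h | h
  · rw [← h]; norm_num
  · have h1M : (1:ℝ) < (M:ℝ) := by exact_mod_cast h
    have := hanti (mem_Ioi.mpr one_pos) (mem_Ioi.mpr (by linarith : (0:ℝ) < (M:ℝ))) h1M
    exact le_of_lt this
end

section
/- Let Y = max(h₁, …, h_n) where h₁, …, h_n are i.i.d. standard exponential random variables, let h be a further standard exponential random variable independent of (h₁,…,h_n), and let 0 < β < 1 be a constant. Then E[ log(1 + Y/(β h)) ] ≤ −n log β / (1 − β). -/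
open MeasureTheory ProbabilityTheory Real Set

open Filter Topology

/-! On the event `log (1 + Y / (β h)) > t` some `hᵢ` exceeds `c h` with `c = β (eᵗ - 1)`. For
independent standard exponentials `P(c h < hᵢ) = E[e^{-c h}] = 1 / (1 + c)`, so the union bound
gives the tail estimate `P(log (1 + Y / (β h)) > t) ≤ n / (1 - β + β eᵗ)`, and integrating it over
`t > 0` (layer-cake formula) yields `n log (1 / β) / (1 - β)`. -/

theorem Finset.aemeasurable_fun_sup' {α δ ι : Type*} [MeasurableSpace α] [SemilatticeSup α]
    [MeasurableSup₂ α] [MeasurableSpace δ] {μ : Measure δ} {s : Finset ι} (hs : s.Nonempty)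
    {f : ι → δ → α} (hf : ∀ i ∈ s, AEMeasurable (f i) μ) :
    AEMeasurable (fun x => s.sup' hs (f · x)) μ := by
  rw [← funext (Finset.sup'_apply hs f)]
  exact Finset.sup'_induction (p := (AEMeasurable · μ)) hs f (fun _ hf _ hg => hf.sup hg) hf

theorem measure_lt_sup'_le_sum {α ι Ω : Type*} [LinearOrder α] [MeasurableSpace Ω]
    (μ : Measure Ω) {s : Finset ι} (hs : s.Nonempty) (a : Ω → α) (f : ι → Ω → α) :
    μ {ω | a ω < s.sup' hs (f · ω)} ≤ ∑ i ∈ s, μ {ω | a ω < f i ω} := by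
  refine (measure_mono fun ω hω => ?_).trans (measure_biUnion_finset_le s _)
  obtain ⟨i, hi, hlt⟩ := (Finset.lt_sup'_iff hs).1 hω
  exact mem_iUnion₂.2 ⟨i, hi, hlt⟩

theorem exp_sub_one_mul_lt_of_lt_log_one_add_div {t y d : ℝ} (hd : 0 < d) (hy : 0 ≤ y)
    (h : t < log (1 + y / d)) : (exp t - 1) * d < y := by
  have hexp := (lt_log_iff_exp_lt (by positivity)).1 h
  rw [← lt_div_iff₀ hd]
  linarith

section IntegralInvAddMulExp

variable {a b : ℝ}

theorem hasDerivAt_neg_log_mul_exp_neg_add_div (ha : 0 < a) (hb : 0 < b) (t : ℝ) :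
    HasDerivAt (fun t => -log (a * exp (-t) + b) / a) (a + b * exp t)⁻¹ t := by
  have hpos : 0 < a * exp (-t) + b := by positivity
  have h := ((((hasDerivAt_neg t).exp.const_mul a).add_const b).log hpos.ne').neg.div_const a
  refine h.congr_deriv ?_
  rw [exp_neg]
  field_simp

theorem tendsto_neg_log_mul_exp_neg_add_div (hb : 0 < b) :
    Tendsto (fun t => -log (a * exp (-t) + b) / a) atTop (𝓝 (-log b / a)) := by
  have h : Tendsto (fun t => a * exp (-t) + b) atTop (𝓝 b) := by
    simpa using ((tendsto_exp_atBot.comp tendsto_neg_atTop_atBot).const_mul a).add_const b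
  exact (((continuousAt_log hb.ne').tendsto.comp h).neg).div_const a

theorem integrableOn_Ioi_inv_add_mul_exp (ha : 0 < a) (hb : 0 < b) :
    IntegrableOn (fun t => (a + b * exp t)⁻¹) (Ioi 0) :=
  integrableOn_Ioi_deriv_of_nonneg' (fun t _ => hasDerivAt_neg_log_mul_exp_neg_add_div ha hb t)
    (fun t _ => by positivity) (tendsto_neg_log_mul_exp_neg_add_div hb)

theorem integral_Ioi_inv_add_mul_exp (ha : 0 < a) (hb : 0 < b) :
    ∫ t in Ioi 0, (a + b * exp t)⁻¹ = log ((a + b) / b) / a := by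
  rw [integral_Ioi_of_hasDerivAt_of_nonneg'
    (fun t _ => hasDerivAt_neg_log_mul_exp_neg_add_div ha hb t) (fun t _ => by positivity)
    (tendsto_neg_log_mul_exp_neg_add_div hb), log_div (add_pos ha hb).ne' hb.ne']
  simp only [neg_zero, exp_zero, mul_one]
  ring

end IntegralInvAddMulExp

theorem integral_le_setIntegral_Ioi_of_measure_lt_le {Ω : Type*} [MeasurableSpace Ω]
    {μ : Measure Ω} {Z : Ω → ℝ} {g : ℝ → ℝ} (hZ : 0 ≤ᵐ[μ] Z) (hZm : AEMeasurable Z μ)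
    (hg : IntegrableOn g (Ioi 0)) (hg0 : ∀ t ∈ Ioi 0, 0 ≤ g t)
    (htail : ∀ t ∈ Ioi 0, μ {ω | t < Z ω} ≤ ENNReal.ofReal (g t)) :
    ∫ ω, Z ω ∂μ ≤ ∫ t in Ioi 0, g t := by
  rw [integral_eq_lintegral_of_nonneg_ae hZ hZm.aestronglyMeasurable,
    lintegral_eq_lintegral_meas_lt μ hZ hZm,
    ← ENNReal.toReal_ofReal (setIntegral_nonneg measurableSet_Ioi hg0)]
  refine ENNReal.toReal_mono ENNReal.ofReal_ne_top ?_
  rw [ofReal_integral_eq_lintegral_ofReal hg (ae_restrict_of_forall_mem measurableSet_Ioi hg0)]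
  exact setLIntegral_mono' measurableSet_Ioi htail

section ExpMeasure

variable {r : ℝ} {Ω : Type*} [MeasurableSpace Ω] {μ : Measure Ω}

theorem expMeasure_Iic_zero (hr : 0 < r) : expMeasure r (Iic 0) = 0 := by
  have := isProbabilityMeasure_expMeasure hr
  rw [← ofReal_cdf, cdf_expMeasure_eq hr]
  simp

theorem ae_pos_expMeasure (hr : 0 < r) : ∀ᵐ x ∂expMeasure r, 0 < x := by
  rw [ae_iff]
  simp only [not_lt]
  exact expMeasure_Iic_zero hr

theorem expMeasure_Ioi (hr : 0 < r) {a : ℝ} (ha : 0 ≤ a) :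
    expMeasure r (Ioi a) = ENNReal.ofReal (exp (-(r * a))) := by
  have := isProbabilityMeasure_expMeasure hr
  rw [← compl_Iic, prob_compl_eq_one_sub measurableSet_Iic, ← ofReal_cdf, cdf_expMeasure_eq hr,
    if_pos ha, ← ENNReal.ofReal_one,
    ← ENNReal.ofReal_sub _ (sub_nonneg.2 (exp_le_one_iff.2 (by nlinarith)))]
  simp

theorem lintegral_exp_neg_mul_expMeasure (hr : 0 < r) {s : ℝ} (hs : 0 ≤ s) :
    ∫⁻ x, ENNReal.ofReal (exp (-(s * x))) ∂expMeasure r = ENNReal.ofReal (r / (r + s)) := by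
  have hrs : 0 < r + s := by linarith
  have hdensity : ∀ x, exponentialPDF r x * ENNReal.ofReal (exp (-(s * x)))
      = ENNReal.ofReal (r / (r + s)) * exponentialPDF (r + s) x := by
    intro x
    rcases lt_or_ge x 0 with hx | hx
    · simp [exponentialPDF_of_neg hx]
    · rw [exponentialPDF_of_nonneg hx, exponentialPDF_of_nonneg hx,
        ← ENNReal.ofReal_mul (by positivity), ← ENNReal.ofReal_mul (by positivity)]
      congr 1
      rw [mul_assoc, ← exp_add]
      field_simp
      ring_nf
  have hexpMeasure : expMeasure r = volume.withDensity (exponentialPDF r) := rfl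
  have hpdf (q : ℝ) : Measurable (exponentialPDF q) :=
    (measurable_exponentialPDFReal q).ennreal_ofReal
  rw [hexpMeasure, lintegral_withDensity_eq_lintegral_mul _ (hpdf r) (by fun_prop)]
  simp only [Pi.mul_apply, hdensity]
  rw [lintegral_const_mul _ (hpdf _),
    lintegral_exponentialPDF_eq_one hrs, mul_one]

theorem expMeasure_prod_setOf_mul_lt (hr : 0 < r) {c : ℝ} (hc : 0 ≤ c) :
    (expMeasure r).prod (expMeasure r) {p : ℝ × ℝ | c * p.1 < p.2}
      = ENNReal.ofReal (1 + c)⁻¹ := by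
  have := isProbabilityMeasure_expMeasure hr
  rw [Measure.prod_apply (measurableSet_lt (by fun_prop) (by fun_prop))]
  calc ∫⁻ x, expMeasure r (Ioi (c * x)) ∂expMeasure r
      = ∫⁻ x, ENNReal.ofReal (exp (-(r * c * x))) ∂expMeasure r := by
        refine lintegral_congr_ae ?_
        filter_upwards [ae_pos_expMeasure hr] with x hx
        rw [expMeasure_Ioi hr (by positivity), mul_assoc]
    _ = ENNReal.ofReal (1 + c)⁻¹ := by
        rw [lintegral_exp_neg_mul_expMeasure hr (by positivity)]
        congr 1
        field_simp

theorem aemeasurable_of_map_eq_expMeasure {X : Ω → ℝ} (hr : 0 < r)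
    (hX : μ.map X = expMeasure r) : AEMeasurable X μ := by
  have := isProbabilityMeasure_expMeasure hr
  exact .of_map_ne_zero (hX ▸ IsProbabilityMeasure.ne_zero _)

theorem ae_pos_of_map_eq_expMeasure {X : Ω → ℝ} (hr : 0 < r) (hX : μ.map X = expMeasure r) :
    ∀ᵐ ω ∂μ, 0 < X ω :=
  ae_of_ae_map (aemeasurable_of_map_eq_expMeasure hr hX) (hX ▸ ae_pos_expMeasure hr)

theorem measure_mul_lt_of_indepFun [IsFiniteMeasure μ] {X Y : Ω → ℝ} (hr : 0 < r)
    (hXY : IndepFun X Y μ) (hX : μ.map X = expMeasure r) (hY : μ.map Y = expMeasure r)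
    {c : ℝ} (hc : 0 ≤ c) :
    μ {ω | c * X ω < Y ω} = ENNReal.ofReal (1 + c)⁻¹ := by
  have hXm := aemeasurable_of_map_eq_expMeasure hr hX
  have hYm := aemeasurable_of_map_eq_expMeasure hr hY
  have hmap : μ.map (fun ω => (X ω, Y ω)) = (expMeasure r).prod (expMeasure r) := by
    rw [(indepFun_iff_map_prod_eq_prod_map_map hXm hYm).1 hXY, hX, hY]
  rw [← expMeasure_prod_setOf_mul_lt hr hc, ← hmap,
    Measure.map_apply_of_aemeasurable (hXm.prodMk hYm)
      (measurableSet_lt (by fun_prop) (by fun_prop))]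
  rfl

end ExpMeasure

theorem measure_lt_log_one_add_sup'_div_le {Ω ι : Type*} [MeasurableSpace Ω] {μ : Measure Ω}
    [IsFiniteMeasure μ] {s : Finset ι} (hs : s.Nonempty) {f : ι → Ω → ℝ} {g : Ω → ℝ}
    {r β t : ℝ} (hr : 0 < r) (hβ : 0 < β) (ht : 0 ≤ t)
    (hf : ∀ i ∈ s, μ.map (f i) = expMeasure r) (hg : μ.map g = expMeasure r)
    (hfg : ∀ i ∈ s, IndepFun g (f i) μ) :
    μ {ω | t < log (1 + s.sup' hs (f · ω) / (β * g ω))}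
      ≤ s.card * ENNReal.ofReal (1 - β + β * exp t)⁻¹ := by
  obtain ⟨i₀, hi₀⟩ := id hs
  have hc : 0 ≤ β * (exp t - 1) := mul_nonneg hβ.le (sub_nonneg.2 (one_le_exp ht))
  calc μ {ω | t < log (1 + s.sup' hs (f · ω) / (β * g ω))}
      ≤ μ {ω | β * (exp t - 1) * g ω < s.sup' hs (f · ω)} := by
        refine measure_mono_ae ?_
        filter_upwards [ae_pos_of_map_eq_expMeasure hr hg,
          ae_pos_of_map_eq_expMeasure hr (hf i₀ hi₀)] with ω hgω hfω hlt
        have hmul := exp_sub_one_mul_lt_of_lt_log_one_add_div (mul_pos hβ hgω)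
          (hfω.le.trans (s.le_sup' (f · ω) hi₀)) hlt
        show β * (exp t - 1) * g ω < _
        linarith
    _ ≤ ∑ i ∈ s, μ {ω | β * (exp t - 1) * g ω < f i ω} := measure_lt_sup'_le_sum μ hs _ f
    _ = s.card * ENNReal.ofReal (1 - β + β * exp t)⁻¹ := by
        rw [Finset.sum_congr rfl fun i hi =>
            measure_mul_lt_of_indepFun hr (hfg i hi) hg (hf i hi) hc, Finset.sum_const,
          nsmul_eq_mul]
        ring_nf

theorem expected_log_rate_single_interferer_bound_general
    {Ω : Type*} [MeasurableSpace Ω] (μ : Measure Ω) [IsProbabilityMeasure μ]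
    (n : ℕ) (hn : 0 < n) (X : Fin (n + 1) → Ω → ℝ)
    (hdist : ∀ i, Measure.map (X i) μ = expMeasure 1)
    (hindep : iIndepFun X μ)
    (β : ℝ) (hβ₀ : 0 < β) (hβ₁ : β < 1) :
    (∫ ω, Real.log (1 +
        (Finset.univ.sup' (Finset.univ_nonempty_iff.mpr
            (Fin.pos_iff_nonempty.mp hn)) fun i : Fin n => X i.castSucc ω) /
          (β * X (Fin.last n) ω)) ∂μ) ≤
      -(n : ℝ) * Real.log β / (1 - β) := by
  have hX i : AEMeasurable (X i) μ := aemeasurable_of_map_eq_expMeasure one_pos (hdist i)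
  have hpos : ∀ᵐ ω ∂μ, ∀ i, 0 < X i ω :=
    ae_all_iff.2 fun i => ae_pos_of_map_eq_expMeasure one_pos (hdist i)
  have h1β : 0 < 1 - β := sub_pos.2 hβ₁
  refine (integral_le_setIntegral_Ioi_of_measure_lt_le ?nonneg ?meas
    ((integrableOn_Ioi_inv_add_mul_exp h1β hβ₀).const_mul n)
    (fun t _ => by positivity) fun t ht => ?tail).trans_eq ?value
  case nonneg =>
    filter_upwards [hpos] with ω hω
    have hY := Finset.le_sup' (fun i : Fin n => X i.castSucc ω) (Finset.mem_univ ⟨0, hn⟩)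
    exact log_nonneg (le_add_of_nonneg_right
      (div_nonneg ((hω _).le.trans hY) (mul_pos hβ₀ (hω _)).le))
  case meas =>
    exact measurable_log.comp_aemeasurable (aemeasurable_const.add
      ((Finset.aemeasurable_fun_sup' _ fun i _ => hX _).div ((hX _).const_mul β)))
  case tail =>
    refine (measure_lt_log_one_add_sup'_div_le _ one_pos hβ₀ ht.out.le (fun i _ => hdist _)
      (hdist _) fun i _ => hindep.indepFun (Fin.castSucc_lt_last i).ne').trans_eq ?_
    rw [Finset.card_univ, Fintype.card_fin, ENNReal.ofReal_mul n.cast_nonneg,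
      ENNReal.ofReal_natCast]
  case value =>
    rw [integral_const_mul, integral_Ioi_inv_add_mul_exp h1β hβ₀, sub_add_cancel, one_div,
      log_inv]
    ring

/-- Let `X 0, …, X (n-1), X n` be independent standard exponential random variables
(`expMeasure 1` has density `e^{-y}` on `[0,∞)`), let
`Y = max (X 0, …, X (n-1))` and let `h = X n` (independent of the others), and let
`0 < β < 1`. Then `E[log(1 + Y/(β h))] ≤ −n log β / (1 − β)`. -/
theorem expected_log_rate_single_interferer_bound
    {Ω : Type*} [MeasurableSpace Ω] (μ : Measure Ω) [IsProbabilityMeasure μ]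
    (n : ℕ) (hn : 0 < n) (X : Fin (n + 1) → Ω → ℝ)
    (hmeas : ∀ i, Measurable (X i))
    (hdist : ∀ i, Measure.map (X i) μ = expMeasure 1)
    (hindep : iIndepFun X μ)
    (β : ℝ) (hβ₀ : 0 < β) (hβ₁ : β < 1) :
    (∫ ω, Real.log (1 +
        (Finset.univ.sup' (Finset.univ_nonempty_iff.mpr
            (Fin.pos_iff_nonempty.mp hn)) fun i : Fin n => X i.castSucc ω) /
          (β * X (Fin.last n) ω)) ∂μ) ≤
      -(n : ℝ) * Real.log β / (1 - β) :=
  expected_log_rate_single_interferer_bound_general μ n hn X hdist hindep β hβ₀ hβ₁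
end

section
/- Let u₁,…,u_n be i.i.d. Bernoulli(α) random variables (0 < α ≤ 1), β₁,…,β_n i.i.d. random variables with 0 < β_min ≤ β_k ≤ β_max almost surely and E[β_k] = ϖ, h₁,…,h_n i.i.d. standard exponential random variables, and p₁,…,p_n i.i.d. random variables taking values in [0,1] with E[p_k] = q, where all four families are mutually independent. Let I = Σ_{k=1}^n u_k β_k h_k p_k. Then for every s ≥ 0, E[ e^{-s I} ] ≤ exp( − n α ϖ q s / (1 + β_max s) ). -/
/-!
For `x ∈ [0,1]`, convexity of `t ↦ e^{-θt}` gives the chord bound `e^{-θx} ≤ 1 - x + x e^{-θ}`.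
With `x = u_k b_k p_k / β_max ∈ [0,1]` and `θ = s β_max h_k`, the two sides separate `h_k` from
`u_k b_k p_k`; since these are independent and `E[e^{-c h_k}] = 1/(1+c)`, one link contributes
`E[e^{-s u_k b_k h_k p_k}] ≤ 1 - α ϖ q s / (1 + β_max s) ≤ exp(-α ϖ q s / (1 + β_max s))`.
The links are independent, so the Laplace transform of `I` is the product of these factors.
-/

open MeasureTheory ProbabilityTheory Real
open scoped ENNReal

lemma exp_neg_mul_le_one_sub_add_mul_exp {x θ : ℝ} (hx₀ : 0 ≤ x) (hx₁ : x ≤ 1) :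
    exp (-(x * θ)) ≤ 1 - x + x * exp (-θ) := by
  have := convexOn_exp.2 (Set.mem_univ 0) (Set.mem_univ (-θ)) (sub_nonneg.2 hx₁) hx₀
    (sub_add_cancel 1 x)
  simpa [mul_neg] using this

lemma integral_exp_neg_mul_expMeasure {r c : ℝ} (hr : 0 < r) (hrc : 0 < r + c) :
    ∫ x, exp (-(c * x)) ∂expMeasure r = r / (r + c) := by
  have hdensity (x : ℝ) : (exponentialPDF r x).toReal • exp (-(c * x)) =
      (Set.Ici 0).indicator (fun x => r * exp (-(r + c) * x)) x := by
    by_cases hx : 0 ≤ x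
    · rw [exponentialPDF_of_nonneg hx, ENNReal.toReal_ofReal (by positivity),
        Set.indicator_of_mem (Set.mem_Ici.2 hx), smul_eq_mul, mul_assoc, ← exp_add]
      ring_nf
    · rw [exponentialPDF_of_neg (not_le.1 hx), Set.indicator_of_notMem (by simpa using hx)]
      simp
  change ∫ x, _ ∂(volume.withDensity (exponentialPDF r)) = _
  have hmeas : Measurable (exponentialPDF r) := (measurable_exponentialPDFReal r).ennreal_ofReal
  rw [integral_withDensity_eq_integral_toReal_smul hmeas
    (ae_of_all _ fun _ => ENNReal.ofReal_lt_top)]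
  simp_rw [hdensity]
  rw [integral_indicator measurableSet_Ici, integral_Ici_eq_integral_Ioi, integral_const_mul,
    integral_exp_mul_Ioi (by linarith)]
  field_simp
  simp

section

variable {Ω : Type*} [MeasurableSpace Ω] {μ : Measure Ω} {U : Ω → ℝ} {c d : ℝ≥0∞}

lemma ae_mem_Icc_of_map_eq_smul_dirac_zero_add_smul_dirac_one (hU : AEMeasurable U μ)
    (hU_law : μ.map U = c • Measure.dirac 0 + d • Measure.dirac 1) :
    ∀ᵐ ω ∂μ, U ω ∈ Set.Icc 0 1 := by
  refine ae_of_ae_map hU ?_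
  rw [hU_law, ae_add_measure_iff]
  constructor <;> refine Measure.ae_smul_measure ?_ _ <;> simp [ae_dirac_eq]

lemma integral_eq_toReal_of_map_eq_smul_dirac_zero_add_smul_dirac_one (hU : AEMeasurable U μ)
    (hU_law : μ.map U = c • Measure.dirac 0 + d • Measure.dirac 1) (hc : c ≠ ∞) (hd : d ≠ ∞) :
    ∫ ω, U ω ∂μ = d.toReal := by
  have hint (a : ℝ) {e : ℝ≥0∞} (he : e ≠ ∞) : Integrable (fun x : ℝ => x) (e • Measure.dirac a) :=
    (integrable_dirac enorm_lt_top).smul_measure he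
  rw [← integral_map (f := fun x => x) hU aestronglyMeasurable_id, hU_law,
    integral_add_measure (hint 0 hc) (hint 1 hd), integral_smul_measure, integral_smul_measure,
    integral_dirac, integral_dirac]
  simp

end

lemma ProbabilityTheory.iIndepFun.curry {Ω ι κ β : Type*} [MeasurableSpace Ω] [MeasurableSpace β]
    {μ : Measure Ω} {X : ι × κ → Ω → β} (hX : ∀ p, Measurable (X p)) (h : iIndepFun X μ) :
    iIndepFun (fun i ω j => X (i, j) ω) μ := by
  have := h.isProbabilityMeasure
  have (p : ι × κ) : IsProbabilityMeasure (μ.map (X p)) :=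
    Measure.isProbabilityMeasure_map (hX p).aemeasurable
  have hblock (i : ι) :
      μ.map (fun ω j => X (i, j) ω) = Measure.infinitePi fun j => μ.map (X (i, j)) :=
    (h.precomp (Prod.mk_right_injective i)).map_fun_eq_infinitePi_map fun j => hX (i, j)
  rw [iIndepFun_iff_map_fun_eq_infinitePi_map fun i => measurable_pi_lambda _ fun j => hX (i, j)]
  simp_rw [hblock]
  rw [← Measure.infinitePi_map_curry (fun i j => μ.map (X (i, j))),
    ← h.map_fun_eq_infinitePi_map hX, Measure.map_map (by fun_prop) (measurable_pi_lambda _ hX)]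
  rfl

lemma ProbabilityTheory.iIndepFun.integral_mul_mul_eq_mul_mul_integral {Ω ι : Type*}
    [MeasurableSpace Ω] {μ : Measure Ω} {f : ι → Ω → ℝ} (h : iIndepFun f μ)
    (hf : ∀ i, Measurable (f i)) {i j k : ι} (hij : i ≠ j) (hik : i ≠ k) (hjk : j ≠ k) :
    ∫ ω, f i ω * f j ω * f k ω ∂μ = (∫ ω, f i ω ∂μ) * (∫ ω, f j ω ∂μ) * ∫ ω, f k ω ∂μ := by
  calc ∫ ω, f i ω * f j ω * f k ω ∂μ = (∫ ω, f i ω * f j ω ∂μ) * ∫ ω, f k ω ∂μ :=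
        (h.indepFun_mul_left hf i j k hik hjk).integral_fun_mul_eq_mul_integral
          ((hf i).mul (hf j)).aestronglyMeasurable (hf k).aestronglyMeasurable
    _ = (∫ ω, f i ω ∂μ) * (∫ ω, f j ω ∂μ) * ∫ ω, f k ω ∂μ := by
        rw [(h.indepFun hij).integral_fun_mul_eq_mul_integral (hf i).aestronglyMeasurable
          (hf j).aestronglyMeasurable]

section

variable {Ω : Type*} [MeasurableSpace Ω] {μ : Measure Ω} [IsProbabilityMeasure μ]

lemma integral_exp_neg_mul_le_of_indepFun {Y T : Ω → ℝ} (hY : Measurable Y) (hT : Measurable T)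
    (hYT : IndepFun Y T μ) (hY_mem : ∀ᵐ ω ∂μ, Y ω ∈ Set.Icc 0 1)
    (hT_int : Integrable (fun ω => exp (-T ω)) μ) :
    ∫ ω, exp (-(Y ω * T ω)) ∂μ ≤ 1 - (∫ ω, Y ω ∂μ) * (1 - ∫ ω, exp (-T ω) ∂μ) := by
  have hY_int : Integrable Y μ :=
    (integrable_const 1).mono' hY.aestronglyMeasurable (by
      filter_upwards [hY_mem] with ω hω
      rw [norm_of_nonneg hω.1]; exact hω.2)
  have hYexp_int : Integrable (fun ω => Y ω * exp (-T ω)) μ :=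
    hT_int.mono' (hY.mul (by fun_prop)).aestronglyMeasurable (by
      filter_upwards [hY_mem] with ω hω
      rw [norm_mul, norm_of_nonneg hω.1, norm_of_nonneg (exp_pos _).le]
      exact mul_le_of_le_one_left (exp_pos _).le hω.2)
  have hone_sub_int : Integrable (fun ω => 1 - Y ω) μ := (integrable_const 1).sub hY_int
  have hbound_int : Integrable (fun ω => 1 - Y ω + Y ω * exp (-T ω)) μ :=
    hone_sub_int.add hYexp_int
  have hpointwise : ∀ᵐ ω ∂μ, exp (-(Y ω * T ω)) ≤ 1 - Y ω + Y ω * exp (-T ω) := by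
    filter_upwards [hY_mem] with ω hω
    exact exp_neg_mul_le_one_sub_add_mul_exp hω.1 hω.2
  have hmul : ∫ ω, Y ω * exp (-T ω) ∂μ = (∫ ω, Y ω ∂μ) * ∫ ω, exp (-T ω) ∂μ :=
    (hYT.comp measurable_id (by fun_prop : Measurable fun t : ℝ => exp (-t)))
      |>.integral_fun_mul_eq_mul_integral hY.aestronglyMeasurable (by fun_prop)
  calc ∫ ω, exp (-(Y ω * T ω)) ∂μ ≤ ∫ ω, 1 - Y ω + Y ω * exp (-T ω) ∂μ :=
        integral_mono_ae (hbound_int.mono' (by fun_prop) (by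
          filter_upwards [hpointwise] with ω hω
          rwa [norm_of_nonneg (exp_pos _).le])) hbound_int hpointwise
    _ = 1 - (∫ ω, Y ω ∂μ) * (1 - ∫ ω, exp (-T ω) ∂μ) := by
        rw [integral_add hone_sub_int hYexp_int, integral_sub (integrable_const 1) hY_int, hmul]
        simp only [integral_const, probReal_univ, smul_eq_mul, one_mul]
        ring

lemma integral_exp_neg_mul_mul_le_of_indepFun_expMeasure {Y H : Ω → ℝ} (hY : Measurable Y)
    (hH : Measurable H) (hYH : IndepFun Y H μ) (hY_mem : ∀ᵐ ω ∂μ, Y ω ∈ Set.Icc 0 1)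
    {r c : ℝ} (hr : 0 < r) (hc : 0 ≤ c) (hH_law : μ.map H = expMeasure r) :
    ∫ ω, exp (-(Y ω * (c * H ω))) ∂μ ≤ 1 - (∫ ω, Y ω ∂μ) * (c / (r + c)) := by
  have hlaplace : ∫ ω, exp (-(c * H ω)) ∂μ = r / (r + c) := by
    rw [← integral_map (f := fun x => exp (-(c * x))) hH.aemeasurable (by fun_prop), hH_law,
      integral_exp_neg_mul_expMeasure hr (by linarith)]
  have hT_int : Integrable (fun ω => exp (-(c * H ω))) μ :=
    Integrable.of_integral_ne_zero (by rw [hlaplace]; positivity)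
  calc ∫ ω, exp (-(Y ω * (c * H ω))) ∂μ
      ≤ 1 - (∫ ω, Y ω ∂μ) * (1 - ∫ ω, exp (-(c * H ω)) ∂μ) :=
        integral_exp_neg_mul_le_of_indepFun hY (hH.const_mul c)
          (hYH.comp measurable_id (measurable_const_mul c)) hY_mem hT_int
    _ = 1 - (∫ ω, Y ω ∂μ) * (c / (r + c)) := by
        rw [hlaplace, one_sub_div (by linarith), add_sub_cancel_left]

lemma integral_exp_neg_mul_mul_mul_mul_le {U B H P : Ω → ℝ} (hind : iIndepFun ![U, B, H, P] μ)
    (hU : Measurable U) (hB : Measurable B) (hH : Measurable H) (hP : Measurable P) {M s : ℝ}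
    (hM : 0 < M) (hs : 0 ≤ s) (hU_mem : ∀ᵐ ω ∂μ, U ω ∈ Set.Icc 0 1)
    (hB_mem : ∀ᵐ ω ∂μ, B ω ∈ Set.Icc 0 M) (hP_mem : ∀ᵐ ω ∂μ, P ω ∈ Set.Icc 0 1)
    (hH_law : μ.map H = expMeasure 1) :
    ∫ ω, exp (-(s * (U ω * B ω * H ω * P ω))) ∂μ ≤
      exp (-((∫ ω, U ω ∂μ) * (∫ ω, B ω ∂μ) * (∫ ω, P ω ∂μ) * s / (1 + M * s))) := by
  have hmeas (i : Fin 4) : Measurable (![U, B, H, P] i) := by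
    fin_cases i <;> assumption
  have hUBP_H : IndepFun (fun ω => U ω * B ω * P ω / M) H μ := by
    have h := hind.indepFun_finsetProd_of_notMem hmeas (s := {0, 1, 3}) (i := 2) (by decide)
    have heq : (∏ j ∈ ({0, 1, 3} : Finset (Fin 4)), ![U, B, H, P] j) = U * (B * P) := by
      simp [Finset.prod_insert]
    rw [heq] at h
    simpa [mul_assoc, Function.comp_def] using h.comp (measurable_id.div_const M) measurable_id
  have hUBP_mean : ∫ ω, U ω * B ω * P ω ∂μ = (∫ ω, U ω ∂μ) * (∫ ω, B ω ∂μ) * ∫ ω, P ω ∂μ :=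
    hind.integral_mul_mul_eq_mul_mul_integral hmeas (i := 0) (j := 1) (k := 3)
      (by decide) (by decide) (by decide)
  have hY_mem : ∀ᵐ ω ∂μ, U ω * B ω * P ω / M ∈ Set.Icc 0 1 := by
    filter_upwards [hU_mem, hB_mem, hP_mem] with ω ⟨hU₀, hU₁⟩ ⟨hB₀, hB₁⟩ ⟨hP₀, hP₁⟩
    rw [Set.mem_Icc, div_le_one hM]
    refine ⟨by positivity, ?_⟩
    calc U ω * B ω * P ω ≤ 1 * M * 1 := by gcongr
      _ = M := by ring
  have hbound := integral_exp_neg_mul_mul_le_of_indepFun_expMeasure (by fun_prop)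
    hH hUBP_H hY_mem one_pos (mul_nonneg hM.le hs) hH_law
  rw [integral_div, hUBP_mean] at hbound
  have hintegrand (ω : Ω) :
      s * (U ω * B ω * H ω * P ω) = U ω * B ω * P ω / M * (M * s * H ω) := by
    field_simp
  simp_rw [hintegrand]
  refine hbound.trans ?_
  have hkey := add_one_le_exp
    (-((∫ ω, U ω ∂μ) * (∫ ω, B ω ∂μ) * (∫ ω, P ω ∂μ) * s / (1 + M * s)))
  have : 0 < 1 + M * s := by positivity
  field_simp at hkey ⊢
  linarith

end

theorem interference_laplace_bound_general
    {Ω : Type*} [MeasurableSpace Ω] (μ : Measure Ω) [IsProbabilityMeasure μ]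
    (n : ℕ) (α : ℝ) (hα₀ : 0 < α)
    (βmin βmax ϖ q : ℝ) (hβmin : 0 < βmin) (hβ : βmin ≤ βmax)
    (u b h p : Fin n → Ω → ℝ)
    (hu_meas : ∀ k, Measurable (u k)) (hb_meas : ∀ k, Measurable (b k))
    (hh_meas : ∀ k, Measurable (h k)) (hp_meas : ∀ k, Measurable (p k))
    (hu_dist : ∀ k, Measure.map (u k) μ =
      (ENNReal.ofReal (1 - α)) • Measure.dirac (0 : ℝ) +
        (ENNReal.ofReal α) • Measure.dirac (1 : ℝ))
    (hb_bounds : ∀ k, ∀ᵐ ω ∂μ, βmin ≤ b k ω ∧ b k ω ≤ βmax)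
    (hb_mean : ∀ k, (∫ ω, b k ω ∂μ) = ϖ)
    (hh_dist : ∀ k, Measure.map (h k) μ = expMeasure 1)
    (hp_bounds : ∀ k, ∀ᵐ ω ∂μ, 0 ≤ p k ω ∧ p k ω ≤ 1)
    (hp_mean : ∀ k, (∫ ω, p k ω ∂μ) = q)
    (hindep : iIndepFun
      (fun i : Fin 4 × Fin n => ![u, b, h, p] i.1 i.2) μ) :
    ∀ s : ℝ, 0 ≤ s →
      (∫ ω, Real.exp (-(s * ∑ k : Fin n, u k ω * b k ω * h k ω * p k ω)) ∂μ) ≤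
        Real.exp (-((n : ℝ) * α * ϖ * q * s) / (1 + βmax * s)) := by
  intro s hs
  have hmeas (i : Fin 4 × Fin n) : Measurable (![u, b, h, p] i.1 i.2) := by
    obtain ⟨i, k⟩ := i
    fin_cases i
    exacts [hu_meas k, hb_meas k, hh_meas k, hp_meas k]
  have hlinks : iIndepFun (fun k ω i => ![u, b, h, p] i k ω) μ :=
    (hindep.precomp Prod.swap_injective).curry fun _ => hmeas _
  have hlink (k : Fin n) : ∫ ω, exp (-(s * (u k ω * b k ω * h k ω * p k ω))) ∂μ ≤
      exp (-(α * ϖ * q * s / (1 + βmax * s))) := by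
    have hind : iIndepFun ![u k, b k, h k, p k] μ := by
      convert hindep.precomp (Prod.mk_left_injective k) using 1
      funext i; fin_cases i <;> rfl
    have := integral_exp_neg_mul_mul_mul_mul_le hind (hu_meas k) (hb_meas k) (hh_meas k)
      (hp_meas k) (hβmin.trans_le hβ) hs
      (ae_mem_Icc_of_map_eq_smul_dirac_zero_add_smul_dirac_one (hu_meas k).aemeasurable (hu_dist k))
      (by filter_upwards [hb_bounds k] with ω hω using ⟨hβmin.le.trans hω.1, hω.2⟩)
      (hp_bounds k) (hh_dist k)
    rwa [integral_eq_toReal_of_map_eq_smul_dirac_zero_add_smul_dirac_one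
      (hu_meas k).aemeasurable (hu_dist k) ENNReal.ofReal_ne_top ENNReal.ofReal_ne_top,
      ENNReal.toReal_ofReal hα₀.le, hb_mean, hp_mean] at this
  calc ∫ ω, exp (-(s * ∑ k, u k ω * b k ω * h k ω * p k ω)) ∂μ
      = ∫ ω, ∏ k, exp (-(s * (u k ω * b k ω * h k ω * p k ω))) ∂μ := by
        simp_rw [Finset.mul_sum, ← Finset.sum_neg_distrib, exp_sum]
    _ = ∏ k, ∫ ω, exp (-(s * (u k ω * b k ω * h k ω * p k ω))) ∂μ :=
        hlinks.integral_fun_prod_comp (f := fun _ v => exp (-(s * (v 0 * v 1 * v 2 * v 3))))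
          (fun k => (measurable_pi_lambda _ fun i => hmeas (i, k)).aemeasurable)
          (fun k => by fun_prop)
    _ ≤ ∏ _k : Fin n, exp (-(α * ϖ * q * s / (1 + βmax * s))) :=
        Finset.prod_le_prod (fun k _ => integral_nonneg fun ω => (exp_pos _).le)
          (fun k _ => hlink k)
    _ = exp (-((n : ℝ) * α * ϖ * q * s) / (1 + βmax * s)) := by
        rw [Finset.prod_const, Finset.card_univ, Fintype.card_fin, ← exp_nat_mul]
        ring_nf

/-- Laplace-transform bound on the aggregate interference (core of Theorem 4):
`u k` i.i.d. Bernoulli(α) (values in `{0,1}`), `b k` i.i.d. shadowing factors with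
`0 < β_min ≤ b k ≤ β_max` a.s. and mean `ϖ`, `h k` i.i.d. standard exponential,
`p k` i.i.d. powers in `[0,1]` with mean `q`, the four families mutually independent.
Then for `I = Σ_k u_k b_k h_k p_k` and every `s ≥ 0`,
`E[e^{-s I}] ≤ exp(−n α ϖ q s / (1 + β_max s))`. -/
theorem interference_laplace_bound
    {Ω : Type*} [MeasurableSpace Ω] (μ : Measure Ω) [IsProbabilityMeasure μ]
    (n : ℕ) (α : ℝ) (hα₀ : 0 < α) (hα₁ : α ≤ 1)
    (βmin βmax ϖ q : ℝ) (hβmin : 0 < βmin) (hβ : βmin ≤ βmax)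
    (u b h p : Fin n → Ω → ℝ)
    (hu_meas : ∀ k, Measurable (u k)) (hb_meas : ∀ k, Measurable (b k))
    (hh_meas : ∀ k, Measurable (h k)) (hp_meas : ∀ k, Measurable (p k))
    (hu_dist : ∀ k, Measure.map (u k) μ =
      (ENNReal.ofReal (1 - α)) • Measure.dirac (0 : ℝ) +
        (ENNReal.ofReal α) • Measure.dirac (1 : ℝ))
    (hb_bounds : ∀ k, ∀ᵐ ω ∂μ, βmin ≤ b k ω ∧ b k ω ≤ βmax)
    (hb_mean : ∀ k, (∫ ω, b k ω ∂μ) = ϖ)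
    (hb_ident : ∀ k j, Measure.map (b k) μ = Measure.map (b j) μ)
    (hh_dist : ∀ k, Measure.map (h k) μ = expMeasure 1)
    (hp_bounds : ∀ k, ∀ᵐ ω ∂μ, 0 ≤ p k ω ∧ p k ω ≤ 1)
    (hp_mean : ∀ k, (∫ ω, p k ω ∂μ) = q)
    (hp_ident : ∀ k j, Measure.map (p k) μ = Measure.map (p j) μ)
    (hindep : iIndepFun
      (fun i : Fin 4 × Fin n => ![u, b, h, p] i.1 i.2) μ) :
    ∀ s : ℝ, 0 ≤ s →
      (∫ ω, Real.exp (-(s * ∑ k : Fin n, u k ω * b k ω * h k ω * p k ω)) ∂μ) ≤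
        Real.exp (-((n : ℝ) * α * ϖ * q * s) / (1 + βmax * s)) :=
  interference_laplace_bound_general μ n α hα₀ βmin βmax ϖ q hβmin hβ u b h p hu_meas hb_meas
    hh_meas hp_meas hu_dist hb_bounds hb_mean hh_dist hp_bounds hp_mean hindep
end
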